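/- For any nonzero μ ∈ span(α₀,...,α₄) ⊂ 𝔽₂^{10} with μ ≠ α₀+α₁+α₂+α₃+α₄, the total number of occurrences of μ as a nonzero element across the ten 4-dimensional subspaces V_{ij} (each counted with multiplicity 8 per containment) is 48 if μ is of the form α_k, α_k + α_{k+2}, or α_{k+2} + α_{k+3} + α_{k+4} (indices mod 5), and 32 otherwise. -/

import Mathlib

/-- Basis vectors `α₀, …, α₄` of the first summand of `𝔽₂^{10}`. -/
noncomputable def alphaV (i : Fin 5) : (Fin 5 ⊕ Fin 5) → ZMod 2 :=
  Pi.single (Sum.inl i) 1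

/-- The ten 4-dimensional subspaces `V_{ij}`. -/
noncomputable def Vij (i : Fin 5) : Fin 2 → Submodule (ZMod 2) ((Fin 5 ⊕ Fin 5) → ZMod 2)
  | 0 => Submodule.span (ZMod 2)
      {alphaV i, alphaV (i - 1), alphaV (i + 1), alphaV (i + 2)}
  | 1 => Submodule.span (ZMod 2)
      {alphaV i, alphaV (i - 1) + alphaV (i + 1), alphaV (i + 2),
        alphaV (i + 1) + alphaV (i + 3)}

open scoped Classical

/-!
Writing `μ = ∑ f k • α_k`, the question lives in `𝔽₂⁵`, where each `V_{ij}` is the kernel of a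
nonzero linear form: `V_{i,i+1} = {f | f (i+3) = 0}` and
`V_{i,i+2} = {f | f (i-1) + f (i+1) + f (i+3) = 0}`. How many of these ten forms vanish at each
of the thirty vectors `f ∉ {0, 1}` (i.e. `μ ∉ {0, ∑ α_k}`) is then a finite check.
-/

open Submodule Finset

section ExtendInl

variable (R M : Type*) {ι κ : Type*} [Semiring R] [AddCommMonoid M] [Module R M]

def extendInl : (ι → M) →ₗ[R] (ι ⊕ κ → M) :=
  (LinearEquiv.sumArrowLequivProdArrow ι κ R M).symm.toLinearMap ∘ₗ LinearMap.inl R _ _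

variable {R M}

lemma extendInl_injective : Function.Injective (extendInl R M : (ι → M) → ι ⊕ κ → M) :=
  fun _ _ h => funext fun a => congrFun h (Sum.inl a)

lemma extendInl_single [DecidableEq ι] [DecidableEq κ] (i : ι) (m : M) :
    extendInl R M (Pi.single i m) = (Pi.single (Sum.inl i) m : ι ⊕ κ → M) := by
  ext (a | b) <;> simp [extendInl, Pi.single_apply]

end ExtendInl

section PentagonSpan

variable {R M N : Type*} [Ring R] [AddCommGroup M] [Module R M] [AddCommGroup N] [Module R N]

def pentagonSpan (α : Fin 5 → M) (i : Fin 5) : Fin 2 → Submodule R M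
  | 0 => span R {α i, α (i - 1), α (i + 1), α (i + 2)}
  | 1 => span R {α i, α (i - 1) + α (i + 1), α (i + 2), α (i + 1) + α (i + 3)}

lemma map_pentagonSpan (φ : M →ₗ[R] N) (α : Fin 5 → M) (i : Fin 5) (j : Fin 2) :
    (pentagonSpan α i j).map φ = pentagonSpan (φ ∘ α) i j := by
  fin_cases j <;> simp [pentagonSpan, map_span, Set.image_insert_eq]

end PentagonSpan

lemma Vij_eq_pentagonSpan (i : Fin 5) (j : Fin 2) : Vij i j = pentagonSpan alphaV i j := by
  fin_cases j <;> rfl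

def pentagonForm (i : Fin 5) : Fin 2 → Module.Dual (ZMod 2) (Fin 5 → ZMod 2)
  | 0 => .proj (i + 3)
  | 1 => .proj (i - 1) + .proj (i + 1) + .proj (i + 3)

lemma pentagonSpan_single_eq_ker (i : Fin 5) (j : Fin 2) :
    pentagonSpan (Pi.single · 1) i j = LinearMap.ker (pentagonForm i j) := by
  apply le_antisymm
  · fin_cases j <;>
      simp only [pentagonSpan, span_le, Set.insert_subset_iff, Set.singleton_subset_iff,
        SetLike.mem_coe, LinearMap.mem_ker] <;>
      revert i <;> decide
  · intro f hf
    rw [LinearMap.mem_ker] at hf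
    fin_cases j
    · have hf_eq : f = f i • Pi.single i 1 + f (i - 1) • Pi.single (i - 1) 1
          + f (i + 1) • Pi.single (i + 1) 1 + f (i + 2) • Pi.single (i + 2) 1 := by
        revert i f; decide
      rw [hf_eq]
      refine add_mem (add_mem (add_mem ?_ ?_) ?_) ?_ <;>
        exact smul_mem _ _ (subset_span (by simp))
    · have hf_eq : f = f i • Pi.single i 1
          + f (i - 1) • (Pi.single (i - 1) 1 + Pi.single (i + 1) 1)
          + f (i + 2) • Pi.single (i + 2) 1
          + f (i + 3) • (Pi.single (i + 1) 1 + Pi.single (i + 3) 1) := by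
        revert i f; decide
      rw [hf_eq]
      refine add_mem (add_mem (add_mem ?_ ?_) ?_) ?_ <;>
        exact smul_mem _ _ (subset_span (by simp))

lemma card_pentagonForm_eq_zero (f : Fin 5 → ZMod 2) (h0 : f ≠ 0) (h1 : f ≠ 1) :
    #{p : Fin 5 × Fin 2 | pentagonForm p.1 p.2 f = 0} =
      if ∃ k : Fin 5, f = Pi.single k 1 ∨ f = Pi.single k 1 + Pi.single (k + 2) 1 ∨
          f = Pi.single (k + 2) 1 + Pi.single (k + 3) 1 + Pi.single (k + 4) 1 then 6 else 4 := by
  revert f; decide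

/-- For nonzero `μ ∈ span(α₀,…,α₄)` with `μ ≠ α₀+α₁+α₂+α₃+α₄`, the total number
of occurrences of `μ` across the ten subspaces `V_{ij}` (counted with
multiplicity 8 per containment) is 48 if `μ` is of the form `α_k`,
`α_k + α_{k+2}`, or `α_{k+2} + α_{k+3} + α_{k+4}` (indices mod 5), and 32
otherwise. -/
theorem stmt_8 (μ : (Fin 5 ⊕ Fin 5) → ZMod 2)
    (hμ : μ ∈ Submodule.span (ZMod 2) (Set.range alphaV))
    (hne0 : μ ≠ 0) (hnesum : μ ≠ ∑ i : Fin 5, alphaV i) :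
    (∑ p : Fin 5 × Fin 2, if μ ∈ Vij p.1 p.2 then (8 : ℕ) else 0)
      = if (∃ k : Fin 5, μ = alphaV k ∨ μ = alphaV k + alphaV (k + 2) ∨
            μ = alphaV (k + 2) + alphaV (k + 3) + alphaV (k + 4))
        then 48 else 32 := by
  set φ := extendInl (ZMod 2) (ZMod 2) (ι := Fin 5) (κ := Fin 5)
  have hφ : Function.Injective φ := extendInl_injective
  have hα : alphaV = φ ∘ (Pi.single · 1) := funext fun k => (extendInl_single k 1).symm
  obtain ⟨f, rfl⟩ : μ ∈ LinearMap.range φ :=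
    span_le.2 (by rintro _ ⟨k, rfl⟩; exact ⟨_, congrFun hα.symm k⟩) hμ
  have hmem (i : Fin 5) (j : Fin 2) : φ f ∈ Vij i j ↔ pentagonForm i j f = 0 := by
    rw [Vij_eq_pentagonSpan, hα, ← map_pentagonSpan, pentagonSpan_single_eq_ker,
      ← mem_comap, comap_map_eq_of_injective hφ, LinearMap.mem_ker]
  have h0 : f ≠ 0 := by rintro rfl; exact hne0 (map_zero φ)
  have h1 : f ≠ 1 := by
    rintro rfl
    refine hnesum ?_
    simp only [hα, Function.comp_apply, ← map_sum, univ_sum_single]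
    rfl
  simp only [hmem, hα, Function.comp_apply, ← map_add, hφ.eq_iff]
  rw [sum_ite, sum_const_zero, sum_const, smul_eq_mul, add_zero,
    card_pentagonForm_eq_zero f h0 h1]
  split_ifs <;> rfl
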